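/- arXiv:2212.05240 — 10 statements merged into one kernel-verified Lean document; each statement's English description precedes it below -/
import Mathlib

section
/- For α, β > 0, the function g2(t) = 1/((αt)^2 − (√((αt+1)^2 − β^2) − 1)^2) is strictly decreasing on the set of t > (β−1)/α where the denominator is positive. -/
set_option maxHeartbeats 1000000


theorem g2_strictAnti (α β : ℝ) (hα : 0 < α) (hβ : 0 < β) :
    StrictAntiOn
      (fun t : ℝ => 1 / ((α * t) ^ 2 - (Real.sqrt ((α * t + 1) ^ 2 - β ^ 2) - 1) ^ 2))
      {t : ℝ | (β - 1) / α < t ∧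
        0 < (α * t) ^ 2 - (Real.sqrt ((α * t + 1) ^ 2 - β ^ 2) - 1) ^ 2} := by
  rintro s ⟨hs1, hs2⟩ t ⟨ht1, ht2⟩ hst
  simp only
  rw [div_lt_div_iff₀ ht2 hs2, one_mul, one_mul]
  have hβs : β < α * s + 1 := by
    have := (div_lt_iff₀ hα).mp hs1
    nlinarith
  have hβt : β < α * t + 1 := by nlinarith
  have hΔs : (0:ℝ) ≤ (α * s + 1) ^ 2 - β ^ 2 := by nlinarith
  have hΔt : (0:ℝ) ≤ (α * t + 1) ^ 2 - β ^ 2 := by nlinarith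
  set a := Real.sqrt ((α * s + 1) ^ 2 - β ^ 2) with ha
  set b := Real.sqrt ((α * t + 1) ^ 2 - β ^ 2) with hb
  have hss : a ^ 2 = (α * s + 1) ^ 2 - β ^ 2 := Real.sq_sqrt hΔs
  have hts : b ^ 2 = (α * t + 1) ^ 2 - β ^ 2 := Real.sq_sqrt hΔt
  have hsn : 0 ≤ a := Real.sqrt_nonneg _
  have htn : 0 ≤ b := Real.sqrt_nonneg _
  have hla : a < α * s + 1 := (Real.sqrt_lt' (by linarith)).mpr (by nlinarith)
  have hlb : b < α * t + 1 := (Real.sqrt_lt' (by linarith)).mpr (by nlinarith)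
  have hbpos : 0 < b := by
    have : 0 < (α * t + 1) ^ 2 - β ^ 2 := by nlinarith
    rw [hb]; exact Real.sqrt_pos.mpr this
  have hsum : 0 < a + b := by linarith
  have key : α * (t - s) * (a + b) < (b - a) * (a + b) := by
    have h1 : (b - a) * (a + b) = α * (t - s) * (α * (t + s) + 2) := by
      have h2 : (b - a) * (a + b) = b ^ 2 - a ^ 2 := by ring
      rw [h2, hss, hts]; ring
    rw [h1]
    exact mul_lt_mul_of_pos_left (by linarith) (by nlinarith)
  have key2 : α * (t - s) < b - a := lt_of_mul_lt_mul_right key (le_of_lt hsum)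
  nlinarith [key2, hss, hts, sq_nonneg (a - b)]
end

section
/- For 0 < β ≤ α, the function g3(t) = 1/((αt)^2 − (√((αt+1)^2 − (βt)^2) − 1)^2) is strictly decreasing on (0, ∞) (on the set where the denominator is positive). -/
set_option maxHeartbeats 1600000

theorem g3_strictAnti_of_le (α β : ℝ) (hβ : 0 < β) (hβα : β ≤ α) :
    StrictAntiOn
      (fun t : ℝ => 1 / ((α * t) ^ 2 - (Real.sqrt ((α * t + 1) ^ 2 - (β * t) ^ 2) - 1) ^ 2))
      {t : ℝ | 0 < t ∧
        0 < (α * t) ^ 2 - (Real.sqrt ((α * t + 1) ^ 2 - (β * t) ^ 2) - 1) ^ 2} := by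
  intro s hs t ht hst
  obtain ⟨hs0, hDs⟩ := hs
  obtain ⟨ht0, hDt⟩ := ht
  simp only [Set.mem_setOf_eq]
  have hα : 0 < α := hβ.trans_le hβα
  have hββ : β * β ≤ α * α := mul_self_le_mul_self hβ.le hβα
  set a := Real.sqrt ((α * s + 1) ^ 2 - (β * s) ^ 2) with ha_def
  set b := Real.sqrt ((α * t + 1) ^ 2 - (β * t) ^ 2) with hb_def
  clear_value a b
  have hΘs : 0 ≤ (α * s + 1) ^ 2 - (β * s) ^ 2 := by
    nlinarith [mul_pos hα hs0, mul_pos hs0 hs0]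
  have hΘt : 0 ≤ (α * t + 1) ^ 2 - (β * t) ^ 2 := by
    nlinarith [mul_pos hα ht0, mul_pos ht0 ht0]
  have ha2 : a ^ 2 = (α * s + 1) ^ 2 - (β * s) ^ 2 := by rw [ha_def]; exact Real.sq_sqrt hΘs
  have hb2 : b ^ 2 = (α * t + 1) ^ 2 - (β * t) ^ 2 := by rw [hb_def]; exact Real.sq_sqrt hΘt
  have ha0 : 0 ≤ a := ha_def ▸ Real.sqrt_nonneg _
  have hb0 : 0 ≤ b := hb_def ▸ Real.sqrt_nonneg _
  have hs1 : 0 < α * s + 1 := by nlinarith [mul_pos hα hs0]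
  have ht1 : 0 < α * t + 1 := by nlinarith [mul_pos hα ht0]
  have haub : a < α * s + 1 := by
    rw [ha_def]
    refine (Real.sqrt_lt' hs1).mpr ?_
    nlinarith [mul_pos hβ hs0]
  have hbub : b < α * t + 1 := by
    rw [hb_def]
    refine (Real.sqrt_lt' ht1).mpr ?_
    nlinarith [mul_pos hβ ht0]
  have hsq : a ^ 2 < b ^ 2 := by
    rw [ha2, hb2]
    nlinarith [mul_pos hα (sub_pos.mpr hst),
      mul_nonneg (sub_nonneg.mpr hββ) (mul_pos (add_pos hs0 ht0) (sub_pos.mpr hst)).le]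
  have hba : a < b := lt_of_pow_lt_pow_left₀ 2 hb0 hsq
  have hab_pos : 0 < a + b := by linarith [ha0.trans_lt hba]
  have hKs : (α * s) ^ 2 - (a - 1) ^ 2 = β ^ 2 * s ^ 2 - 2 * α * s - 2 + 2 * a := by
    linear_combination -ha2
  have hKt : (α * t) ^ 2 - (b - 1) ^ 2 = β ^ 2 * t ^ 2 - 2 * α * t - 2 + 2 * b := by
    linear_combination -hb2
  have hdiff : (b - a) * (a + b) = (t - s) * ((α ^ 2 - β ^ 2) * (s + t) + 2 * α) := by
    linear_combination hb2 - ha2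
  have key : (α * s) ^ 2 - (a - 1) ^ 2 < (α * t) ^ 2 - (b - 1) ^ 2 := by
    rw [hKs, hKt]
    rcases le_or_gt (2 * α) (β ^ 2 * (s + t)) with h | h
    · have h0 := mul_nonneg (sub_nonneg.mpr hst.le) (sub_nonneg.mpr h)
      nlinarith [h0, hba]
    · have hab : a + b < α * (s + t) + 2 := by linarith
      have h1 : (2 * α - β ^ 2 * (s + t)) * (a + b)
          < (2 * α - β ^ 2 * (s + t)) * (α * (s + t) + 2) :=
        mul_lt_mul_of_pos_left hab (by linarith)
      have hv2 : 0 ≤ α * β ^ 2 * (s + t) ^ 2 := by positivity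
      have h2 : (2 * α - β ^ 2 * (s + t)) * (a + b)
          < 2 * ((α ^ 2 - β ^ 2) * (s + t) + 2 * α) := by nlinarith
      have h3 := mul_lt_mul_of_pos_left h2 (sub_pos.mpr hst)
      have h4 : 2 * (b - a) * (a + b) = (t - s) * (2 * ((α ^ 2 - β ^ 2) * (s + t) + 2 * α)) := by
        linear_combination 2 * hdiff
      by_contra hc
      push_neg at hc
      have h5 := mul_le_mul_of_nonneg_right
        (show 2 * (b - a) ≤ (t - s) * (2 * α - β ^ 2 * (s + t)) by nlinarith [hc]) hab_pos.le
      nlinarith [h3, h4, h5]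
  exact one_div_lt_one_div_of_lt hDs key
end

section
/- For 0 < α < β, the function g3(t) = 1/((αt)^2 − (√((αt+1)^2 − (βt)^2) − 1)^2) is strictly decreasing on (0, 2α/(β^2 − α^2)) (on the set where the denominator is positive). -/
set_option maxHeartbeats 1600000


theorem g3_strictAnti_of_lt (α β : ℝ) (hα : 0 < α) (hαβ : α < β) :
    StrictAntiOn
      (fun t : ℝ => 1 / ((α * t) ^ 2 - (Real.sqrt ((α * t + 1) ^ 2 - (β * t) ^ 2) - 1) ^ 2))
      {t : ℝ | t ∈ Set.Ioo 0 (2 * α / (β ^ 2 - α ^ 2)) ∧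
        0 < (α * t) ^ 2 - (Real.sqrt ((α * t + 1) ^ 2 - (β * t) ^ 2) - 1) ^ 2} := by
  have hc : 0 < β ^ 2 - α ^ 2 := by nlinarith
  intro x hx y hy hxy
  obtain ⟨⟨hx0, hxT⟩, hDx⟩ := hx
  obtain ⟨⟨hy0, hyT⟩, hDy⟩ := hy
  have hxc : x * (β ^ 2 - α ^ 2) < 2 * α := (lt_div_iff₀ hc).mp hxT
  have hyc : y * (β ^ 2 - α ^ 2) < 2 * α := (lt_div_iff₀ hc).mp hyT
  have hΘx : 1 < (α * x + 1) ^ 2 - (β * x) ^ 2 := by nlinarith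
  have hΘy : 1 < (α * y + 1) ^ 2 - (β * y) ^ 2 := by nlinarith
  set sx := Real.sqrt ((α * x + 1) ^ 2 - (β * x) ^ 2) with hsx
  set sy := Real.sqrt ((α * y + 1) ^ 2 - (β * y) ^ 2) with hsy
  have e1 : sx ^ 2 = (α * x + 1) ^ 2 - (β * x) ^ 2 := Real.sq_sqrt (by linarith)
  have e2 : sy ^ 2 = (α * y + 1) ^ 2 - (β * y) ^ 2 := Real.sq_sqrt (by linarith)
  have hsx0 : 0 ≤ sx := Real.sqrt_nonneg _
  have hsy0 : 0 ≤ sy := Real.sqrt_nonneg _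
  have hsx1 : 1 < sx := by nlinarith
  have hsy1 : 1 < sy := by nlinarith
  have hsx2 : sx < α * x + 1 := by
    have hb : 0 < (β * x) ^ 2 := pow_pos (mul_pos (hα.trans hαβ) hx0) 2
    have hax : 0 < α * x := mul_pos hα hx0
    rw [hsx]
    refine (Real.sqrt_lt' (by linarith)).mpr (by linarith)
  have hsy2 : sy < α * y + 1 := by
    have hb : 0 < (β * y) ^ 2 := pow_pos (mul_pos (hα.trans hαβ) hy0) 2
    have hay : 0 < α * y := mul_pos hα hy0
    rw [hsy]
    refine (Real.sqrt_lt' (by linarith)).mpr (by linarith)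
  simp only [Set.mem_setOf_eq]
  have hS : (0:ℝ) < sx + sy := by linarith
  have hkey : (((α * y) ^ 2 - (sy - 1) ^ 2) - ((α * x) ^ 2 - (sx - 1) ^ 2)) * (sx + sy)
      = (y - x) * ((β ^ 2 * (x + y) - 2 * α) * (sx + sy)
        + 2 * (2 * α - (β ^ 2 - α ^ 2) * (x + y))) := by
    linear_combination (sx + sy - 2) * e1 - (sx + sy - 2) * e2
  have hG : 0 < (β ^ 2 * (x + y) - 2 * α) * (sx + sy)
      + 2 * (2 * α - (β ^ 2 - α ^ 2) * (x + y)) := by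
    have hβ : 0 < β := hα.trans hαβ
    have ha2x : 0 < α ^ 2 * x := mul_pos (pow_pos hα 2) hx0
    have ha2y : 0 < α ^ 2 * y := mul_pos (pow_pos hα 2) hy0
    rcases le_or_gt (2 * α) ((β ^ 2 - α ^ 2) * (x + y)) with h | h
    · have q1 : 0 < β ^ 2 * (x + y) - 2 * α := by nlinarith
      have q2 : 0 ≤ (β ^ 2 * (x + y) - 2 * α) * (sx + sy - 2) :=
        mul_nonneg q1.le (by linarith)
      nlinarith [q2]
    · rcases le_or_gt (β ^ 2 * (x + y)) (2 * α) with h2 | h2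
      · have hp1 : 0 ≤ 2 * α - β ^ 2 * (x + y) := by linarith
        have hp2 : 0 ≤ 2 + α * (x + y) - (sx + sy) := by linarith
        have q3 : 0 < α * β ^ 2 * (x + y) ^ 2 :=
          mul_pos (mul_pos hα (pow_pos hβ 2)) (pow_pos (by linarith) 2)
        nlinarith [mul_nonneg hp1 hp2, q3]
      · have q4 : 0 < (β ^ 2 * (x + y) - 2 * α) * (sx + sy) :=
          mul_pos (by linarith) hS
        nlinarith [q4]
  have h5 : 0 < (((α * y) ^ 2 - (sy - 1) ^ 2) - ((α * x) ^ 2 - (sx - 1) ^ 2)) * (sx + sy) := by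
    rw [hkey]
    exact mul_pos (by linarith) hG
  have hlt : ((α * x) ^ 2 - (sx - 1) ^ 2) < ((α * y) ^ 2 - (sy - 1) ^ 2) := by
    nlinarith [h5, hS]
  exact one_div_lt_one_div_of_lt hDx hlt
end

section
/- For α, β, λ > 0, define δ(υ) = (1+υ^2)/((αλ − υ^2)^2 + (βυ)^2) for υ ∈ ℝ. If β ≥ √((αλ)^2 + 2αλ), then the supremum of δ over ℝ is attained at υ = 0 and equals 1/(αλ)^2. -/
theorem delta_sup_large_beta (α β l : ℝ) (hα : 0 < α) (hβ : 0 < β) (hl : 0 < l)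
    (hcond : Real.sqrt ((α * l) ^ 2 + 2 * α * l) ≤ β) :
    (∀ υ : ℝ, (1 + υ ^ 2) / ((α * l - υ ^ 2) ^ 2 + (β * υ) ^ 2) ≤ 1 / (α * l) ^ 2) ∧
    (1 + (0 : ℝ) ^ 2) / ((α * l - (0 : ℝ) ^ 2) ^ 2 + (β * 0) ^ 2) = 1 / (α * l) ^ 2 := by
  have hA : 0 < α * l := mul_pos hα hl
  have hsq : (α * l) ^ 2 + 2 * α * l ≤ β ^ 2 := by
    have h0 : (0:ℝ) ≤ (α * l) ^ 2 + 2 * α * l := by positivity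
    nlinarith [Real.sq_sqrt h0, Real.sqrt_nonneg ((α * l) ^ 2 + 2 * α * l)]
  constructor
  · intro υ
    have hden : 0 < (α * l - υ ^ 2) ^ 2 + (β * υ) ^ 2 := by
      rcases eq_or_ne υ 0 with h | h
      · simp [h]; positivity
      · have : 0 < (β * υ) ^ 2 := by positivity
        nlinarith [sq_nonneg (α * l - υ ^ 2)]
    rw [div_le_div_iff₀ hden (by positivity)]
    nlinarith [sq_nonneg υ, sq_nonneg (υ ^ 2), mul_le_mul_of_nonneg_left hsq (sq_nonneg υ)]
  · norm_num
end

section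
/- For α, β, λ > 0 with 0 < β < √((αλ)^2 + 2αλ), define δ(υ) = (1+υ^2)/((αλ − υ^2)^2 + (βυ)^2) and Δ = (αλ+1)^2 − β^2. Then sup_{υ∈ℝ} δ(υ) = 1/((αλ)^2 − (√Δ − 1)^2), and the supremum is attained at υ = ±√(√Δ − 1). -/
theorem delta_sup_small_beta (α β l : ℝ) (hα : 0 < α) (hβ : 0 < β) (hl : 0 < l)
    (hcond : β < Real.sqrt ((α * l) ^ 2 + 2 * α * l)) :
    (∀ υ : ℝ, (1 + υ ^ 2) / ((α * l - υ ^ 2) ^ 2 + (β * υ) ^ 2) ≤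
      1 / ((α * l) ^ 2 - (Real.sqrt ((α * l + 1) ^ 2 - β ^ 2) - 1) ^ 2)) ∧
    (∀ υ : ℝ, (υ = Real.sqrt (Real.sqrt ((α * l + 1) ^ 2 - β ^ 2) - 1) ∨
        υ = -Real.sqrt (Real.sqrt ((α * l + 1) ^ 2 - β ^ 2) - 1)) →
      (1 + υ ^ 2) / ((α * l - υ ^ 2) ^ 2 + (β * υ) ^ 2) =
        1 / ((α * l) ^ 2 - (Real.sqrt ((α * l + 1) ^ 2 - β ^ 2) - 1) ^ 2)) := by
  have ha0 : 0 < α * l := mul_pos hα hl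
  set a := α * l with ha
  have hβ2 : β ^ 2 < a ^ 2 + 2 * a := by
    have h := (Real.lt_sqrt hβ.le).mp hcond
    nlinarith
  have hΔ : (1 : ℝ) < (a + 1) ^ 2 - β ^ 2 := by nlinarith
  set u := Real.sqrt ((a + 1) ^ 2 - β ^ 2) with hudef
  have hu1 : 1 < u := (Real.lt_sqrt zero_le_one).mpr (by nlinarith)
  have hu2 : u ^ 2 = (a + 1) ^ 2 - β ^ 2 := Real.sq_sqrt (by nlinarith)
  have hua : u < a + 1 := by nlinarith [Real.sqrt_nonneg ((a + 1) ^ 2 - β ^ 2)]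
  have hc : 0 < a ^ 2 - (u - 1) ^ 2 := by nlinarith
  constructor
  · intro υ
    have hD : 0 < (a - υ ^ 2) ^ 2 + (β * υ) ^ 2 := by
      nlinarith [sq_nonneg (υ ^ 2 - (u - 1)), sq_nonneg υ]
    rw [div_le_div_iff₀ hD hc]
    nlinarith [sq_nonneg (υ ^ 2 - (u - 1)), sq_nonneg υ]
  · intro υ hυ
    have ht : υ ^ 2 = u - 1 := by
      rcases hυ with h | h <;> subst h <;>
        simp [neg_pow, Real.sq_sqrt (by linarith : (0:ℝ) ≤ u - 1)]
    have hnum : 1 + υ ^ 2 = u := by rw [ht]; ring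
    have key : (a - υ ^ 2) ^ 2 + (β * υ) ^ 2 = (a ^ 2 - (u - 1) ^ 2) * u := by
      have h1 : (β * υ) ^ 2 = β ^ 2 * (u - 1) := by rw [mul_pow, ht]
      rw [h1, ht]
      linear_combination (u - 1) * hu2
    rw [hnum, key]
    rw [eq_div_iff hc.ne']
    field_simp
end

section
/- For α, β, λ > 0, define θ(υ) = (1+υ^2)/((αλ − υ^2)^2 + (βλυ)^2). If β ≥ √(α^2 + 2α/λ), then sup_{υ∈ℝ} θ(υ) = 1/(αλ)^2, attained at υ = 0. -/
theorem theta_sup_large_beta (α β l : ℝ) (hα : 0 < α) (hβ : 0 < β) (hl : 0 < l)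
    (hcond : Real.sqrt (α ^ 2 + 2 * α / l) ≤ β) :
    (∀ υ : ℝ, (1 + υ ^ 2) / ((α * l - υ ^ 2) ^ 2 + (β * l * υ) ^ 2) ≤ 1 / (α * l) ^ 2) ∧
    (1 + (0 : ℝ) ^ 2) / ((α * l - (0 : ℝ) ^ 2) ^ 2 + (β * l * 0) ^ 2) = 1 / (α * l) ^ 2 := by
  have hal : 0 < α * l := mul_pos hα hl
  have hnn : 0 ≤ α ^ 2 + 2 * α / l := by positivity
  have hb2 : α ^ 2 + 2 * α / l ≤ β ^ 2 := by
    rw [← Real.sq_sqrt hnn]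
    exact pow_le_pow_left₀ (Real.sqrt_nonneg _) hcond 2
  have hkey : α ^ 2 * l ^ 2 + 2 * α * l ≤ β ^ 2 * l ^ 2 := by
    have h2 : 2 * α / l * l = 2 * α := div_mul_cancel₀ _ (ne_of_gt hl)
    nlinarith [mul_le_mul_of_nonneg_right hb2 (sq_nonneg l), sq_nonneg l]
  constructor
  · intro υ
    have hden : 0 < (α * l - υ ^ 2) ^ 2 + (β * l * υ) ^ 2 := by
      rcases eq_or_ne υ 0 with h | h
      · simp [h]; positivity
      · have : 0 < (β * l * υ) ^ 2 := by positivity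
        nlinarith [sq_nonneg (α * l - υ ^ 2)]
    rw [div_le_div_iff₀ hden (by positivity)]
    nlinarith [sq_nonneg υ, sq_nonneg (υ ^ 2), mul_le_mul_of_nonneg_right hkey (sq_nonneg υ)]
  · norm_num
end

section
/- For α, β, λ > 0 with β < √(α^2 + 2α/λ), define θ(υ) = (1+υ^2)/((αλ − υ^2)^2 + (βλυ)^2) and Θ = (αλ+1)^2 − (βλ)^2. Then sup_{υ∈ℝ} θ(υ) = 1/((αλ)^2 − (√Θ − 1)^2), attained at υ = ±√(√Θ − 1). -/
theorem theta_sup_small_beta (α β l : ℝ) (hα : 0 < α) (hβ : 0 < β) (hl : 0 < l)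
    (hcond : β < Real.sqrt (α ^ 2 + 2 * α / l)) :
    (∀ υ : ℝ, (1 + υ ^ 2) / ((α * l - υ ^ 2) ^ 2 + (β * l * υ) ^ 2) ≤
      1 / ((α * l) ^ 2 - (Real.sqrt ((α * l + 1) ^ 2 - (β * l) ^ 2) - 1) ^ 2)) ∧
    (∀ υ : ℝ, (υ = Real.sqrt (Real.sqrt ((α * l + 1) ^ 2 - (β * l) ^ 2) - 1) ∨
        υ = -Real.sqrt (Real.sqrt ((α * l + 1) ^ 2 - (β * l) ^ 2) - 1)) →
      (1 + υ ^ 2) / ((α * l - υ ^ 2) ^ 2 + (β * l * υ) ^ 2) =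
        1 / ((α * l) ^ 2 - (Real.sqrt ((α * l + 1) ^ 2 - (β * l) ^ 2) - 1) ^ 2)) := by
  set a := α * l with ha
  set b := β * l with hb
  have hapos : 0 < a := by positivity
  have hbpos : 0 < b := by positivity
  -- b^2 < a^2 + 2a
  have hb2 : b ^ 2 < a ^ 2 + 2 * a := by
    have h0 : (0:ℝ) ≤ α ^ 2 + 2 * α / l := by positivity
    have h1 : β ^ 2 < α ^ 2 + 2 * α / l := by
      have := Real.sq_sqrt h0
      nlinarith [Real.sqrt_nonneg (α ^ 2 + 2 * α / l), hβ]
    have h2 : (α ^ 2 + 2 * α / l) * l ^ 2 = a ^ 2 + 2 * a := by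
      field_simp [ha]
      ring
    have h3 : β ^ 2 * l ^ 2 < (α ^ 2 + 2 * α / l) * l ^ 2 :=
      mul_lt_mul_of_pos_right h1 (by positivity)
    have h4 : b ^ 2 = β ^ 2 * l ^ 2 := by rw [hb]; ring
    linarith
  set s := Real.sqrt ((a + 1) ^ 2 - b ^ 2) with hsdef
  have hΘnn : (0:ℝ) ≤ (a + 1) ^ 2 - b ^ 2 := by nlinarith
  have hs2 : s ^ 2 = (a + 1) ^ 2 - b ^ 2 := Real.sq_sqrt hΘnn
  have hs1 : 1 < s := by
    have : (1:ℝ) < (a + 1) ^ 2 - b ^ 2 := by nlinarith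
    nlinarith [Real.sqrt_nonneg ((a + 1) ^ 2 - b ^ 2), hs2]
  have hsa : s < a + 1 := by
    nlinarith [Real.sqrt_nonneg ((a + 1) ^ 2 - b ^ 2), hs2, hbpos]
  have hD : 0 < a ^ 2 - (s - 1) ^ 2 := by nlinarith
  have hQpos : ∀ υ : ℝ, 0 < (a - υ ^ 2) ^ 2 + (b * υ) ^ 2 := by
    intro υ
    nlinarith [sq_nonneg (1 + υ ^ 2 - s), hs2, sq_nonneg υ,
      mul_nonneg hD.le (sq_nonneg υ)]
  constructor
  · intro υ
    rw [div_le_div_iff₀ (hQpos υ) hD]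
    nlinarith [sq_nonneg (1 + υ ^ 2 - s), hs2]
  · intro υ hυ
    have htnn : (0:ℝ) ≤ s - 1 := by linarith
    have hu : υ ^ 2 = s - 1 := by
      rcases hυ with h | h
      · rw [h, Real.sq_sqrt htnn]
      · rw [h, neg_sq, Real.sq_sqrt htnn]
    rw [div_eq_div_iff (hQpos υ).ne' hD.ne']
    have hbu : (b * υ) ^ 2 = b ^ 2 * (s - 1) := by rw [mul_pow, hu]
    rw [hbu, hu]
    linear_combination (1 - s) * hs2
end

section
/- Define H_abs(λ) = 1/(αλ) if β ≥ √((αλ)^2 + 2αλ) and H_abs(λ) = 1/√((αλ)^2 − (√((αλ+1)^2 − β^2) − 1)^2) otherwise, and H_rel(λ) = 1/(αλ) if β ≥ √(α^2 + 2α/λ) and H_rel(λ) = 1/√((αλ)^2 − (√((αλ+1)^2 − (βλ)^2) − 1)^2) otherwise. For every α, β > 0 and every λ with 0 < λ < 1, H_abs(λ) ≤ H_rel(λ). -/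
noncomputable def Habs (α β l : ℝ) : ℝ :=
  if β ^ 2 ≥ (α * l) ^ 2 + 2 * α * l then 1 / (α * l)
  else 1 / Real.sqrt ((α * l) ^ 2 - (Real.sqrt ((α * l + 1) ^ 2 - β ^ 2) - 1) ^ 2)

noncomputable def Hrel (α β l : ℝ) : ℝ :=
  if β ^ 2 ≥ α ^ 2 + 2 * α / l then 1 / (α * l)
  else 1 / Real.sqrt ((α * l) ^ 2 - (Real.sqrt ((α * l + 1) ^ 2 - (β * l) ^ 2) - 1) ^ 2)

theorem habs_le_hrel (α β l : ℝ) (hα : 0 < α) (hβ : 0 < β) (hl : 0 < l) (hl1 : l < 1) :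
    Habs α β l ≤ Hrel α β l := by
  unfold Habs Hrel
  have ha : 0 < α * l := mul_pos hα hl
  by_cases h1 : β ^ 2 ≥ α ^ 2 + 2 * α / l
  · have h2 : β ^ 2 ≥ (α * l) ^ 2 + 2 * α * l := by
      have hdiv : 2 * α * l ≤ 2 * α / l := by
        rw [le_div_iff₀ hl]; nlinarith
      have hal : (α * l) ^ 2 ≤ α ^ 2 := by
        nlinarith [mul_nonneg (mul_pos hα hα).le (show (0:ℝ) ≤ 1 - l * l by nlinarith)]
      linarith
    rw [if_pos h1, if_pos h2]
  · push_neg at h1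
    rw [if_neg (not_le.mpr h1)]
    -- key bound on (β*l)^2
    have hbl : (β * l) ^ 2 < (α * l) ^ 2 + 2 * α * l := by
      have := mul_lt_mul_of_pos_right h1 (mul_pos hl hl)
      have hdl : 2 * α / l * (l * l) = 2 * α * l := by field_simp
      nlinarith [this]
    set s := Real.sqrt ((α * l + 1) ^ 2 - (β * l) ^ 2) - 1 with hs
    have hAnn : (0:ℝ) ≤ (α * l + 1) ^ 2 - (β * l) ^ 2 := by nlinarith
    have hs0 : 0 < s := by
      have : (1:ℝ) < Real.sqrt ((α * l + 1) ^ 2 - (β * l) ^ 2) :=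
        (Real.lt_sqrt (by norm_num)).mpr (by nlinarith)
      simp [hs]; linarith
    have hsa : s < α * l := by
      have : Real.sqrt ((α * l + 1) ^ 2 - (β * l) ^ 2) < α * l + 1 :=
        (Real.sqrt_lt' (by positivity)).mpr (by nlinarith [mul_pos hβ hl])
      simp [hs]; linarith
    have hden : 0 < (α * l) ^ 2 - s ^ 2 := by nlinarith
    have hsq : 0 < Real.sqrt ((α * l) ^ 2 - s ^ 2) := Real.sqrt_pos.mpr hden
    by_cases h2 : β ^ 2 ≥ (α * l) ^ 2 + 2 * α * l
    · rw [if_pos h2]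
      apply one_div_le_one_div_of_le hsq
      calc Real.sqrt ((α * l) ^ 2 - s ^ 2) ≤ Real.sqrt ((α * l) ^ 2) :=
            Real.sqrt_le_sqrt (by nlinarith)
        _ = α * l := Real.sqrt_sq ha.le
    · push_neg at h2
      rw [if_neg (not_le.mpr h2)]
      set t := Real.sqrt ((α * l + 1) ^ 2 - β ^ 2) - 1 with ht
      have hbb : β ^ 2 > (β * l) ^ 2 := by
        nlinarith [mul_pos (mul_pos hβ hβ) (show (0:ℝ) < 1 - l * l by nlinarith)]
      have hts : t ≤ s := by
        have : Real.sqrt ((α * l + 1) ^ 2 - β ^ 2) ≤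
            Real.sqrt ((α * l + 1) ^ 2 - (β * l) ^ 2) :=
          Real.sqrt_le_sqrt (by nlinarith)
        simp [ht, hs]; linarith
      have ht0 : 0 ≤ t := by
        have : (1:ℝ) ≤ Real.sqrt ((α * l + 1) ^ 2 - β ^ 2) :=
          (Real.le_sqrt' one_pos).mpr (by nlinarith)
        simp [ht]; linarith
      apply one_div_le_one_div_of_le hsq
      apply Real.sqrt_le_sqrt
      have : t ^ 2 ≤ s ^ 2 := pow_le_pow_left₀ ht0 hts 2
      linarith
end

section
/- With H_abs and H_rel as defined (the closed-form L2 gains for the absolute and relative velocity protocols), for every α, β > 0 and every λ > 1, H_rel(λ) ≤ H_abs(λ). -/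
lemma sqrt_aux (a b : ℝ) (ha : 0 < a) (hb : 0 < b) (h : b ^ 2 < a ^ 2 + 2 * a) :
    1 < Real.sqrt ((a + 1) ^ 2 - b ^ 2) ∧ Real.sqrt ((a + 1) ^ 2 - b ^ 2) < a + 1 := by
  constructor
  · exact (Real.lt_sqrt zero_le_one).mpr (by nlinarith)
  · exact (Real.sqrt_lt' (by linarith)).mpr (by nlinarith)

theorem hrel_le_habs (α β l : ℝ) (hα : 0 < α) (hβ : 0 < β) (hl1 : 1 < l) :
    Hrel α β l ≤ Habs α β l := by
  have hl0 : 0 < l := lt_trans one_pos hl1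
  have ha : 0 < α * l := by positivity
  unfold Hrel Habs
  by_cases hCa : β ^ 2 ≥ (α * l) ^ 2 + 2 * α * l
  · have hCr : β ^ 2 ≥ α ^ 2 + 2 * α / l := by
      have h1 : α ^ 2 ≤ (α * l) ^ 2 := by nlinarith [mul_nonneg (sq_nonneg α) (by nlinarith : (0:ℝ) ≤ l ^ 2 - 1)]
      have h2 : 2 * α / l ≤ 2 * α * l := by
        rw [div_le_iff₀ hl0]; nlinarith
      linarith
    rw [if_pos hCr, if_pos hCa]
  · rw [if_neg hCa]
    push_neg at hCa
    set a := α * l with hadef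
    have hblt : β ^ 2 < a ^ 2 + 2 * a := by linarith [hCa]
    obtain ⟨hs1, hs2⟩ := sqrt_aux a β ha hβ hblt
    set s := Real.sqrt ((a + 1) ^ 2 - β ^ 2) with hsdef
    have hpos : 0 < a ^ 2 - (s - 1) ^ 2 := by nlinarith
    by_cases hCr : β ^ 2 ≥ α ^ 2 + 2 * α / l
    · rw [if_pos hCr]
      apply one_div_le_one_div_of_le (Real.sqrt_pos.mpr hpos)
      calc Real.sqrt (a ^ 2 - (s - 1) ^ 2) ≤ Real.sqrt (a ^ 2) :=
            Real.sqrt_le_sqrt (by nlinarith)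
        _ = a := Real.sqrt_sq ha.le
    · rw [if_neg hCr]
      push_neg at hCr
      have hbl : (β * l) ^ 2 < a ^ 2 + 2 * a := by
        have h := mul_lt_mul_of_pos_right hCr (by positivity : (0:ℝ) < l ^ 2)
        have : α ^ 2 * l ^ 2 + 2 * α / l * l ^ 2 = a ^ 2 + 2 * a := by
          field_simp [hadef]; ring
        nlinarith
      obtain ⟨hr1, hr2⟩ := sqrt_aux a (β * l) ha (by positivity) hbl
      set r := Real.sqrt ((a + 1) ^ 2 - (β * l) ^ 2) with hrdef
      have hrs : r ≤ s := by
        apply Real.sqrt_le_sqrt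
        nlinarith [mul_nonneg (sq_nonneg β) (by nlinarith : (0:ℝ) ≤ l ^ 2 - 1)]
      have hposr : 0 < a ^ 2 - (r - 1) ^ 2 := by nlinarith
      apply one_div_le_one_div_of_le (Real.sqrt_pos.mpr hpos)
      apply Real.sqrt_le_sqrt
      nlinarith
end

section
/- For fixed β, λ > 0, the function α ↦ H_abs(α, β, λ) is strictly decreasing on (0, ∞), where H_abs is the closed-form L2 gain of the absolute velocity protocol. -/
/-- Key lemma: `√((x+1)²-β²) - x` is strictly increasing. -/
lemma habs_key (β x y : ℝ) (hβ : 0 < β) (hx : 0 ≤ x) (hb : β ^ 2 ≤ (x + 1) ^ 2)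
    (hxy : x < y) :
    Real.sqrt ((x + 1) ^ 2 - β ^ 2) - x < Real.sqrt ((y + 1) ^ 2 - β ^ 2) - y := by
  set u := Real.sqrt ((x + 1) ^ 2 - β ^ 2) with hu
  have hu0 : 0 ≤ u := Real.sqrt_nonneg _
  have hu2 : u ^ 2 = (x + 1) ^ 2 - β ^ 2 := Real.sq_sqrt (by linarith)
  have hux : u < x + 1 := by nlinarith
  have h2 : u + (y - x) < Real.sqrt ((y + 1) ^ 2 - β ^ 2) := by
    rw [Real.lt_sqrt (by nlinarith : (0:ℝ) ≤ u + (y - x))]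
    nlinarith
  linarith

set_option maxHeartbeats 1600000 in
theorem habs_strictAnti_in_alpha (β l : ℝ) (hβ : 0 < β) (hl : 0 < l) :
    StrictAntiOn (fun a : ℝ => Habs a β l) (Set.Ioi 0) := by
  -- threshold
  set s := Real.sqrt (β ^ 2 + 1) with hs
  have hs2 : s ^ 2 = β ^ 2 + 1 := Real.sq_sqrt (by positivity)
  have hs1 : 1 < s := by nlinarith [Real.sqrt_nonneg (β ^ 2 + 1)]
  set T := s - 1 with hT
  have hT0 : 0 < T := by linarith
  have hT2 : T ^ 2 = β ^ 2 - 2 * T := by nlinarith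
  -- condition iff
  have cond_iff : ∀ x : ℝ, 0 < x → ((β ^ 2 ≥ x ^ 2 + 2 * x) ↔ x ≤ T) := by
    intro x hx
    constructor
    · intro h
      nlinarith
    · intro h
      nlinarith
  -- inner expression rewrite / lower bound for x > T
  have G2 : ∀ x : ℝ, T < x →
      T ^ 2 < x ^ 2 - (Real.sqrt ((x + 1) ^ 2 - β ^ 2) - 1) ^ 2 := by
    intro x hTx
    have hb : β ^ 2 ≤ (x + 1) ^ 2 := by nlinarith
    have hk := habs_key β T x hβ hT0.le (by nlinarith) hTx
    have h1 : (T + 1) ^ 2 - β ^ 2 = 1 := by nlinarith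
    rw [h1, Real.sqrt_one] at hk
    set u := Real.sqrt ((x + 1) ^ 2 - β ^ 2) with hu
    have hu2 : u ^ 2 = (x + 1) ^ 2 - β ^ 2 := Real.sq_sqrt (by linarith)
    nlinarith
  -- G is positive and strictly increasing
  have Gpos : ∀ x : ℝ, T < x →
      T < Real.sqrt (x ^ 2 - (Real.sqrt ((x + 1) ^ 2 - β ^ 2) - 1) ^ 2) := by
    intro x hTx
    exact (Real.lt_sqrt hT0.le).mpr (G2 x hTx)
  intro a ha b hb hab
  simp only [Set.mem_Ioi] at ha hb
  simp only [Habs]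
  set x := a * l with hxdef
  set y := b * l with hydef
  have hx : 0 < x := mul_pos ha hl
  have hy : 0 < y := mul_pos hb hl
  have hxy : x < y := by
    exact mul_lt_mul_of_pos_right hab hl
  have harr : 2 * a * l = 2 * x := by ring
  have harr' : 2 * b * l = 2 * y := by ring
  rw [harr, harr']
  by_cases hcy : β ^ 2 ≥ y ^ 2 + 2 * y
  · -- then x also in first branch
    have hcx : β ^ 2 ≥ x ^ 2 + 2 * x := by nlinarith
    rw [if_pos hcx, if_pos hcy]
    exact one_div_lt_one_div_of_lt hx hxy
  · rw [if_neg hcy]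
    have hTy : T < y := by
      by_contra h
      exact hcy ((cond_iff y hy).mpr (le_of_not_gt h))
    have hGy := Gpos y hTy
    by_cases hcx : β ^ 2 ≥ x ^ 2 + 2 * x
    · rw [if_pos hcx]
      have hxT : x ≤ T := (cond_iff x hx).mp hcx
      exact one_div_lt_one_div_of_lt hx (lt_of_le_of_lt hxT hGy)
    · rw [if_neg hcx]
      have hTx : T < x := by
        by_contra h
        exact hcx ((cond_iff x hx).mpr (le_of_not_gt h))
      have hGx := Gpos x hTx
      apply one_div_lt_one_div_of_lt (lt_trans hT0 hGx)
      apply Real.sqrt_lt_sqrt (by nlinarith [G2 x hTx])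
      have hbx : β ^ 2 ≤ (x + 1) ^ 2 := by nlinarith
      have hby : β ^ 2 ≤ (y + 1) ^ 2 := by nlinarith
      have hk := habs_key β x y hβ hx.le hbx hxy
      set u := Real.sqrt ((x + 1) ^ 2 - β ^ 2) with hu
      set v := Real.sqrt ((y + 1) ^ 2 - β ^ 2) with hv
      have hu2 : u ^ 2 = (x + 1) ^ 2 - β ^ 2 := Real.sq_sqrt (by linarith)
      have hv2 : v ^ 2 = (y + 1) ^ 2 - β ^ 2 := Real.sq_sqrt (by linarith)
      have e1 : x ^ 2 - (u - 1) ^ 2 = β ^ 2 - 2 - 2 * x + 2 * u := by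
        linear_combination -hu2
      have e2 : y ^ 2 - (v - 1) ^ 2 = β ^ 2 - 2 - 2 * y + 2 * v := by
        linear_combination -hv2
      rw [e1, e2]
      linarith
end
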